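/- Let k, m, n be positive integers and let α be a group automorphism of Z/k. Let G be the subgroup of (Z/mk) × (Z/nk) consisting of pairs (a, b) such that α applied to the reduction of a modulo k equals the reduction of b modulo k (reductions via the canonical projections Z/mk → Z/k and Z/nk → Z/k). Then G is a cyclic group if and only if gcd(m, n) = 1. -/
import Mathlib


/-- The fiber product `(Z/mk, Z/m, Z/nk, Z/n)_α`, i.e. the subgroup of
`Z/mk × Z/nk` of pairs `(a, b)` with `α(a mod k) = b mod k`, is cyclic
if and only if `gcd(m, n) = 1`. -/
theorem stmt3 (k m n : ℕ) (hk : 0 < k) (hm : 0 < m) (hn : 0 < n)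
    (α : ZMod k ≃+ ZMod k) :
    IsAddCyclic
      (AddMonoidHom.ker
        ((α.toAddMonoidHom.comp
            ((ZMod.castHom (⟨m, Nat.mul_comm m k⟩ : k ∣ m * k) (ZMod k)).toAddMonoidHom.comp
              (AddMonoidHom.fst (ZMod (m * k)) (ZMod (n * k))))) -
          ((ZMod.castHom (⟨n, Nat.mul_comm n k⟩ : k ∣ n * k) (ZMod k)).toAddMonoidHom.comp
            (AddMonoidHom.snd (ZMod (m * k)) (ZMod (n * k)))))) ↔ Nat.Coprime m n := by
  haveI : NeZero k := ⟨hk.ne'⟩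
  haveI : NeZero (m * k) := ⟨(Nat.mul_pos hm hk).ne'⟩
  haveI : NeZero (n * k) := ⟨(Nat.mul_pos hn hk).ne'⟩
  set f :=
      ((α.toAddMonoidHom.comp
            ((ZMod.castHom (⟨m, Nat.mul_comm m k⟩ : k ∣ m * k) (ZMod k)).toAddMonoidHom.comp
              (AddMonoidHom.fst (ZMod (m * k)) (ZMod (n * k))))) -
          ((ZMod.castHom (⟨n, Nat.mul_comm n k⟩ : k ∣ n * k) (ZMod k)).toAddMonoidHom.comp
            (AddMonoidHom.snd (ZMod (m * k)) (ZMod (n * k))))) with hfdef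
  have hfapp : ∀ a b, f (a, b) = α ((ZMod.castHom (⟨m, Nat.mul_comm m k⟩ : k ∣ m * k) (ZMod k)) a)
      - (ZMod.castHom (⟨n, Nat.mul_comm n k⟩ : k ∣ n * k) (ZMod k)) b := by
    intro a b; rfl
  -- surjectivity
  have hsurj : Function.Surjective f := by
    intro x
    refine ⟨(0, -((x.val : ZMod (n * k)))), ?_⟩
    rw [hfapp, map_zero, map_zero, map_neg, map_natCast, ZMod.natCast_val, ZMod.cast_id,
      zero_sub, neg_neg]
  have hcard : Nat.card (AddMonoidHom.ker f) = m * n * k := by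
    have h1 := AddSubgroup.card_eq_card_quotient_mul_card_addSubgroup (AddMonoidHom.ker f)
    have h2 : Nat.card ((ZMod (m * k) × ZMod (n * k)) ⧸ AddMonoidHom.ker f) = k := by
      rw [Nat.card_congr (QuotientAddGroup.quotientKerEquivOfSurjective f hsurj).toEquiv,
        Nat.card_zmod]
    rw [h2] at h1
    have h3 : Nat.card (ZMod (m * k) × ZMod (n * k)) = (m * k) * (n * k) := by
      simp [Nat.card_prod, Nat.card_zmod]
    rw [h3] at h1
    have h4 : m * k * (n * k) = k * (m * n * k) := by ring
    rw [h4] at h1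
    exact (Nat.eq_of_mul_eq_mul_left hk h1.symm)
  constructor
  · intro hcyc
    obtain ⟨g, hgen⟩ := hcyc.exists_generator
    have hog : addOrderOf g = m * n * k := by
      rw [addOrderOf_eq_card_of_forall_mem_zmultiples hgen, hcard]
    rw [← AddSubgroup.addOrderOf_coe] at hog
    obtain ⟨⟨a, b⟩, hg⟩ := g
    rw [Prod.addOrderOf_mk] at hog
    have ha : addOrderOf a ∣ m * k := by
      apply addOrderOf_dvd_of_nsmul_eq_zero
      simp [nsmul_eq_mul, ZMod.natCast_self]
    have hb : addOrderOf b ∣ n * k := by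
      apply addOrderOf_dvd_of_nsmul_eq_zero
      simp [nsmul_eq_mul, ZMod.natCast_self]
    have hdvd : m * n * k ∣ Nat.lcm m n * k := by
      rw [← hog, ← Nat.lcm_mul_right]
      exact Nat.lcm_dvd (ha.trans (Nat.dvd_lcm_left _ _)) (hb.trans (Nat.dvd_lcm_right _ _))
    have hdvd2 : m * n ∣ Nat.lcm m n := (Nat.mul_dvd_mul_iff_right hk).mp hdvd
    have hlcm : Nat.lcm m n = m * n :=
      Nat.dvd_antisymm (Nat.lcm_dvd (Dvd.intro n rfl) (Dvd.intro_left m rfl)) hdvd2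
    have := Nat.gcd_mul_lcm m n
    rw [hlcm] at this
    have hmn : 0 < m * n := Nat.mul_pos hm hn
    have : Nat.gcd m n = 1 := by
      have := Nat.eq_of_mul_eq_mul_right hmn (this.trans (one_mul (m * n)).symm)
      exact this
    exact this
  · intro hmn
    -- α 1 has additive order k, hence its val is coprime to k
    have hα1 : addOrderOf (α (1 : ZMod k)) = k := by
      have h0 := addOrderOf_injective α.toAddMonoidHom α.injective 1
      rw [ZMod.addOrderOf_one] at h0
      exact h0
    have hcop : Nat.Coprime (α (1 : ZMod k)).val k := by
      have h1 : ((α (1 : ZMod k)).val : ZMod k) = α 1 := by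
        rw [ZMod.natCast_val, ZMod.cast_id]
      rw [← h1, ZMod.addOrderOf_coe _ (NeZero.ne k)] at hα1
      have hg : Nat.gcd k (α (1 : ZMod k)).val ∣ k := Nat.gcd_dvd_left _ _
      have h2 := Nat.mul_div_cancel' hg
      rw [hα1] at h2
      have h3 : Nat.gcd k (α (1 : ZMod k)).val = 1 :=
        Nat.eq_of_mul_eq_mul_right hk (h2.trans (one_mul k).symm)
      exact (Nat.coprime_iff_gcd_eq_one.mpr h3).symm
    -- lift to a unit of ZMod (n*k)
    obtain ⟨v, hv⟩ := ZMod.unitsMap_surjective (⟨n, Nat.mul_comm n k⟩ : k ∣ n * k)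
      (ZMod.unitOfCoprime _ hcop)
    have hvcast : (ZMod.castHom (⟨n, Nat.mul_comm n k⟩ : k ∣ n * k) (ZMod k)) (v : ZMod (n * k))
        = α 1 := by
      have := congrArg (Units.val) hv
      rw [ZMod.unitsMap_def] at this
      simpa [ZMod.coe_unitOfCoprime] using this
    have hvord : addOrderOf ((v : ZMod (n * k))) = n * k := by
      have h1 : (((v : ZMod (n * k)).val : ZMod (n * k))) = (v : ZMod (n * k)) := by
        rw [ZMod.natCast_val, ZMod.cast_id]
      rw [← h1, ZMod.addOrderOf_coe _ (NeZero.ne (n * k))]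
      rw [(ZMod.val_coe_unit_coprime v).symm.gcd_eq_one, Nat.div_one]
    have hgmem : ((1 : ZMod (m * k)), (v : ZMod (n * k))) ∈ AddMonoidHom.ker f := by
      rw [AddMonoidHom.mem_ker, hfapp, map_one, hvcast, sub_self]
    apply isAddCyclic_of_addOrderOf_eq_card (⟨_, hgmem⟩ : AddMonoidHom.ker f)
    rw [AddSubgroup.addOrderOf_mk, Prod.addOrderOf_mk, ZMod.addOrderOf_one, hvord, hcard,
      Nat.lcm_mul_right, hmn.lcm_eq_mul]
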